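/- Let α ∈ (0,2) and a ∈ ℝ with |a| < 1. Then ∫₁^∞ 2r / ((r²−1)^{α/2} (r²−a²)) dr = (π/sin(απ/2)) · (1−a²)^{−α/2}. -/

import Mathlib

/-!
Substituting `s = r² - 1` turns the integral into `∫₀^∞ s^(-α/2) / (s + (1 - a²)) ds`; scaling
`s = (1 - a²) t` pulls out the factor `(1 - a²)^(-α/2)`, and `t = x / (1 - x)` turns
`∫₀^∞ t^(-β) / (1 + t) dt` into the beta integral `B(1 - β, β) = Γ(1 - β) Γ(β) = π / sin (π β)`.
-/

open Real MeasureTheory Set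

theorem integral_Ioo_rpow_mul_one_sub_rpow {u v : ℝ} (hu : 0 < u) (hv : 0 < v) :
    ∫ x in Ioo (0 : ℝ) 1, x ^ (u - 1) * (1 - x) ^ (v - 1) = Gamma u * Gamma v / Gamma (u + v) := by
  have hB : Complex.betaIntegral u v
      = ↑(∫ x in Ioo (0 : ℝ) 1, x ^ (u - 1) * (1 - x) ^ (v - 1)) := by
    rw [Complex.betaIntegral, intervalIntegral.integral_of_le zero_le_one,
      integral_Ioc_eq_integral_Ioo, ← integral_complex_ofReal]
    refine setIntegral_congr_fun measurableSet_Ioo fun x ⟨hx0, hx1⟩ => ?_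
    push_cast
    rw [Complex.ofReal_cpow hx0.le, Complex.ofReal_cpow (sub_nonneg.2 hx1.le)]
    push_cast
    rfl
  have hΓ := Complex.Gamma_mul_Gamma_eq_betaIntegral (s := u) (t := v) (by simpa) (by simpa)
  rw [hB, ← Complex.ofReal_add] at hΓ
  simp only [Complex.Gamma_ofReal] at hΓ
  rw [eq_div_iff (Gamma_pos_of_pos (add_pos hu hv)).ne', mul_comm]
  exact_mod_cast hΓ.symm

theorem integral_Ioi_eq_integral_Ioo_div_one_sub (f : ℝ → ℝ) :
    ∫ t in Ioi (0 : ℝ), f t = ∫ x in Ioo (0 : ℝ) 1, ((1 - x) ^ 2)⁻¹ * f (x / (1 - x)) := by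
  have himage : (fun x : ℝ => x / (1 - x)) '' Ioo 0 1 = Ioi 0 := by
    refine (image_subset_iff.2 fun x hx => div_pos hx.1 (sub_pos.2 hx.2)).antisymm
      fun t (ht : 0 < t) =>
        ⟨t / (1 + t), ⟨by positivity, (div_lt_one (by positivity)).2 (by linarith)⟩, ?_⟩
    field_simp
    ring
  have hderiv : ∀ x ∈ Ioo (0 : ℝ) 1,
      HasDerivWithinAt (fun x : ℝ => x / (1 - x)) ((1 - x) ^ 2)⁻¹ (Ioo 0 1) x := by
    intro x hx
    have h := (hasDerivAt_id' x).div ((hasDerivAt_const x (1 : ℝ)).sub (hasDerivAt_id' x))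
      (sub_pos.2 hx.2).ne'
    exact (h.congr_deriv (by simp only [Pi.sub_apply]; ring)).hasDerivWithinAt
  have hinj : InjOn (fun x : ℝ => x / (1 - x)) (Ioo 0 1) := by
    intro x hx y hy hxy
    field_simp [(sub_pos.2 hx.2).ne', (sub_pos.2 hy.2).ne'] at hxy
    linarith
  rw [← himage, integral_image_eq_integral_abs_deriv_smul measurableSet_Ioo hderiv hinj]
  simp_rw [smul_eq_mul, abs_of_nonneg (inv_nonneg.2 (sq_nonneg (1 - _ : ℝ)))]

theorem integral_Ioi_rpow_neg_div_one_add {β : ℝ} (hβ0 : 0 < β) (hβ1 : β < 1) :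
    ∫ t in Ioi (0 : ℝ), t ^ (-β) / (1 + t) = π / sin (π * β) := by
  have hB := integral_Ioo_rpow_mul_one_sub_rpow (sub_pos.2 hβ1) hβ0
  rw [sub_add_cancel, Gamma_one, div_one, mul_comm, Gamma_mul_Gamma_one_sub] at hB
  rw [integral_Ioi_eq_integral_Ioo_div_one_sub, ← hB]
  refine setIntegral_congr_fun measurableSet_Ioo fun x ⟨hx0, hx1⟩ => ?_
  have h1x : 0 < 1 - x := sub_pos.2 hx1
  rw [div_rpow hx0.le h1x.le, rpow_neg hx0.le, rpow_neg h1x.le, sub_sub_cancel_left,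
    rpow_neg hx0.le, rpow_sub_one h1x.ne']
  field_simp
  ring

theorem integral_Ioi_rpow_neg_div_add {c : ℝ} (hc : 0 < c) (β : ℝ) :
    ∫ s in Ioi (0 : ℝ), s ^ (-β) / (s + c) = c ^ (-β) * ∫ t in Ioi (0 : ℝ), t ^ (-β) / (1 + t) := by
  have hscale := integral_comp_mul_left_Ioi (fun s => s ^ (-β) / (s + c)) 0 hc
  rw [mul_zero, eq_inv_smul_iff₀ hc.ne'] at hscale
  rw [← hscale, smul_eq_mul, ← integral_const_mul, ← integral_const_mul]
  refine setIntegral_congr_fun measurableSet_Ioi fun t (ht : 0 < t) => ?_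
  rw [mul_rpow hc.le ht.le, show c * t + c = c * (1 + t) by ring]
  field_simp

theorem integral_Ioi_one_comp_sq_sub_one (f : ℝ → ℝ) :
    ∫ r in Ioi (1 : ℝ), 2 * r * f (r ^ 2 - 1) = ∫ s in Ioi (0 : ℝ), f s := by
  have himage : (fun r : ℝ => r ^ 2 - 1) '' Ioi 1 = Ioi 0 := by
    refine (image_subset_iff.2 fun r (hr : 1 < r) => ?_).antisymm
      fun s (hs : 0 < s) => ⟨√(s + 1), ?_, ?_⟩
    · simp only [mem_preimage, mem_Ioi]; nlinarith
    · exact (lt_sqrt zero_le_one).2 (by linarith)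
    · simp [sq_sqrt (by linarith : (0 : ℝ) ≤ s + 1)]
  have hderiv : ∀ r ∈ Ioi (1 : ℝ), HasDerivWithinAt (fun r : ℝ => r ^ 2 - 1) (2 * r) (Ioi 1) r :=
    fun r _ => by simpa using ((hasDerivAt_pow 2 r).sub_const 1).hasDerivWithinAt
  have hinj : InjOn (fun r : ℝ => r ^ 2 - 1) (Ioi 1) := by
    intro x (hx : 1 < x) y (hy : 1 < y) hxy
    simp only [sub_left_inj] at hxy
    nlinarith
  rw [← himage, integral_image_eq_integral_abs_deriv_smul measurableSet_Ioi hderiv hinj]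
  refine setIntegral_congr_fun measurableSet_Ioi fun r (hr : 1 < r) => ?_
  rw [smul_eq_mul, abs_of_pos (by linarith)]

/-- For `α ∈ (0,2)` and `|a| < 1`,
`∫₁^∞ 2r/((r²−1)^{α/2}(r²−a²)) dr = (π/sin(απ/2)) (1−a²)^{−α/2}`. -/
theorem beta_type_integral_over_Ioi_one (α a : ℝ) (hα : α ∈ Set.Ioo (0 : ℝ) 2)
    (ha : |a| < 1) :
    ∫ r in Set.Ioi (1 : ℝ), 2 * r / ((r ^ 2 - 1) ^ (α / 2) * (r ^ 2 - a ^ 2))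
      = (π / Real.sin (α * π / 2)) * (1 - a ^ 2) ^ (-(α / 2)) := by
  obtain ⟨hα0, hα2⟩ := hα
  have hc : 0 < 1 - a ^ 2 := by nlinarith [sq_abs a, abs_nonneg a]
  have hintegrand : ∀ r ∈ Ioi (1 : ℝ), 2 * r / ((r ^ 2 - 1) ^ (α / 2) * (r ^ 2 - a ^ 2))
      = 2 * r * ((r ^ 2 - 1) ^ (-(α / 2)) / (r ^ 2 - 1 + (1 - a ^ 2))) := by
    intro r (hr : 1 < r)
    rw [rpow_neg (by nlinarith), show r ^ 2 - 1 + (1 - a ^ 2) = r ^ 2 - a ^ 2 by ring]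
    field_simp
  rw [setIntegral_congr_fun measurableSet_Ioi hintegrand,
    integral_Ioi_one_comp_sq_sub_one (fun s => s ^ (-(α / 2)) / (s + (1 - a ^ 2))),
    integral_Ioi_rpow_neg_div_add hc,
    integral_Ioi_rpow_neg_div_one_add (by positivity) (by linarith),
    mul_comm, mul_div_assoc', mul_comm π]
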